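/- Let X be a discrete metric space of bounded geometry and T ∈ B(ℓ²(X)) a quasi-local operator with ‖T‖ ≤ 1. Then for every ε ∈ (0,1) there exist δ > 0 and R > 0 such that for every h ∈ ℓ∞(X) with ‖h‖∞ = 1 and |h(x) − h(y)| < δ whenever d(x,y) ≤ R, one has ‖[T,h]‖ < ε. -/

import Mathlib

open scoped ENNReal
open Metric Set Function

noncomputable section

variable {X : Type*}

/-- The pointwise product of an `ℓ∞` function and an `ℓ²` function is again `ℓ²`. -/
theorem memℓp_two_mul (f : lp (fun _ : X => ℂ) ∞) (ξ : lp (fun _ : X => ℂ) 2) :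
    Memℓp (fun x => f x * ξ x) 2 := by
  apply memℓp_gen
  have h2 : (2 : ℝ≥0∞).toReal = 2 := by norm_num
  rw [h2]
  have hsum : Summable fun x => ‖f‖ ^ (2:ℝ) * ‖ξ x‖ ^ (2:ℝ) :=
    (by simpa [h2] using (lp.memℓp ξ).summable (by rw [h2]; norm_num) :
      Summable fun x => ‖ξ x‖ ^ (2:ℝ)).mul_left _
  refine Summable.of_nonneg_of_le (fun x => by positivity) (fun x => ?_) hsum
  have h1 : ‖f x * ξ x‖ ≤ ‖f‖ * ‖ξ x‖ := by
    rw [norm_mul]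
    exact mul_le_mul_of_nonneg_right (lp.norm_apply_le_norm (by norm_num) f x) (norm_nonneg _)
  calc ‖f x * ξ x‖ ^ (2:ℝ) ≤ (‖f‖ * ‖ξ x‖) ^ (2:ℝ) := by
        gcongr
    _ = ‖f‖ ^ (2:ℝ) * ‖ξ x‖ ^ (2:ℝ) := by
        rw [Real.mul_rpow (norm_nonneg _) (norm_nonneg _)]

/-- Multiplication by a bounded function `f ∈ ℓ∞(X)`, as a bounded operator on `ℓ²(X)`. -/
def mulOp (f : lp (fun _ : X => ℂ) ∞) :
    lp (fun _ : X => ℂ) 2 →L[ℂ] lp (fun _ : X => ℂ) 2 :=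
  LinearMap.mkContinuous
    { toFun := fun ξ => ⟨fun x => f x * ξ x, memℓp_two_mul f ξ⟩
      map_add' := fun ξ η => Subtype.ext <| funext fun x => by
        simp only [lp.coeFn_add, Pi.add_apply, mul_add]
      map_smul' := fun c ξ => Subtype.ext <| funext fun x => by
        simp only [lp.coeFn_smul, Pi.smul_apply, smul_eq_mul, RingHom.id_apply]
        ring }
    ‖f‖ (by
      intro ξ
      refine lp.norm_le_of_forall_sum_le (by norm_num) (by positivity) fun s => ?_
      have hb : ∀ x ∈ s, ‖f x * ξ x‖ ^ ((2:ℝ≥0∞).toReal)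
          ≤ ‖f‖ ^ ((2:ℝ≥0∞).toReal) * ‖ξ x‖ ^ ((2:ℝ≥0∞).toReal) := by
        intro x _
        rw [← Real.mul_rpow (norm_nonneg _) (norm_nonneg _)]
        refine Real.rpow_le_rpow (norm_nonneg _) ?_ (by norm_num)
        rw [norm_mul]
        exact mul_le_mul_of_nonneg_right (lp.norm_apply_le_norm (by norm_num) f x) (norm_nonneg _)
      calc ∑ x ∈ s, ‖f x * ξ x‖ ^ ((2:ℝ≥0∞).toReal)
          ≤ ∑ x ∈ s, ‖f‖ ^ ((2:ℝ≥0∞).toReal) * ‖ξ x‖ ^ ((2:ℝ≥0∞).toReal) :=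
            Finset.sum_le_sum hb
        _ = ‖f‖ ^ ((2:ℝ≥0∞).toReal) * ∑ x ∈ s, ‖ξ x‖ ^ ((2:ℝ≥0∞).toReal) := by
            rw [Finset.mul_sum]
        _ ≤ ‖f‖ ^ ((2:ℝ≥0∞).toReal) * ‖ξ‖ ^ ((2:ℝ≥0∞).toReal) :=
            mul_le_mul_of_nonneg_left (lp.sum_rpow_le_norm_rpow (by norm_num) ξ s)
              (Real.rpow_nonneg (norm_nonneg _) _)
        _ = (‖f‖ * ‖ξ‖) ^ ((2:ℝ≥0∞).toReal) :=
            (Real.mul_rpow (norm_nonneg _) (norm_nonneg _)).symm)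

/-- `d(supp f, supp g) > R`: every point of the support of `f` is at distance `> R` from
every point of the support of `g`. -/
def SepGT [MetricSpace X] (R : ℝ) (f g : lp (fun _ : X => ℂ) ∞) : Prop :=
  ∀ x ∈ Function.support (⇑f : X → ℂ), ∀ y ∈ Function.support (⇑g : X → ℂ), R < dist x y

/-- A bounded operator `T` on `ℓ²(X)` is *quasi-local* if for every `ε > 0` there is `R > 0`
such that `‖f T g‖ ≤ ε ‖f‖∞ ‖g‖∞` whenever the supports of `f, g ∈ ℓ∞(X)` are `R`-separated. -/
def QuasiLocal [MetricSpace X]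
    (T : lp (fun _ : X => ℂ) 2 →L[ℂ] lp (fun _ : X => ℂ) 2) : Prop :=
  ∀ ε > (0 : ℝ), ∃ R > (0 : ℝ), ∀ f g : lp (fun _ : X => ℂ) ∞, SepGT R f g →
    ‖mulOp f ∘L T ∘L mulOp g‖ ≤ ε * ‖f‖ * ‖g‖

/-!
Write `h = ℜh + i ℑh`; after rescaling by `N = 1/δ` it suffices to treat a real function `v`
with values in an interval `[a, a + M]` that varies by less than `1` on `R`-balls. Up to an
error of sup norm `1`, `v - a` is the layer-cake sum of the indicators `P_k` of
`E_k = {v - a > k}`, `1 ≤ k ≤ M`. With `F_k = {v - a ≤ k - 1}` and the band `B_k` left between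
them, `[T, P_k] = P_F T P_E + P_B T P_E - P_E T P_F - P_E T P_B`. The sets `F_k` and `E_k` are
`R`-separated, so quasi-locality makes the first and third terms small; the bands are pairwise
disjoint, so by orthogonality each of the sums over `k` of the second and fourth terms has norm
at most `√M ‖T‖`. Hence `‖[T, v]‖ ≤ 2Mε' + 2(√M + 1)‖T‖`, which becomes
`4ε' + O(N^(-1/2))` after dividing by `N` (with `M = 2N`).
-/

local notation "ℓ²" => lp (fun _ : X => ℂ) 2
local notation "ℓ∞" => lp (fun _ : X => ℂ) ∞

@[simp]
theorem mulOp_apply (f : ℓ∞) (ξ : ℓ²) (x : X) : mulOp f ξ x = f x * ξ x := rfl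

theorem norm_mulOp_le (f : ℓ∞) : ‖mulOp f‖ ≤ ‖f‖ :=
  LinearMap.mkContinuous_norm_le _ (norm_nonneg f) _

def mulOpₗ : ℓ∞ →ₗ[ℂ] ℓ² →L[ℂ] ℓ² where
  toFun := mulOp
  map_add' f g := by ext ξ x; simp [add_mul]
  map_smul' c f := by ext ξ x; simp [mul_assoc]

theorem mulOp_add (f g : ℓ∞) : mulOp (f + g) = mulOp f + mulOp g := mulOpₗ.map_add f g

theorem mulOp_smul (c : ℂ) (f : ℓ∞) : mulOp (c • f) = c • mulOp f := mulOpₗ.map_smul c f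

theorem mulOp_sum {ι : Type*} (s : Finset ι) (f : ι → ℓ∞) :
    mulOp (∑ i ∈ s, f i) = ∑ i ∈ s, mulOp (f i) :=
  map_sum mulOpₗ f s

theorem mulOp_one : mulOp (1 : ℓ∞) = 1 := by
  ext ξ x; simp [lp.infty_coeFn_one]

def indicatorLp (s : Set X) : ℓ∞ :=
  ⟨s.indicator 1, memℓp_infty ⟨1, by
    rintro _ ⟨x, rfl⟩
    by_cases hx : x ∈ s <;> simp [hx]⟩⟩

theorem indicatorLp_apply (s : Set X) (x : X) : indicatorLp s x = s.indicator 1 x := rfl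

theorem norm_indicatorLp_le (s : Set X) : ‖indicatorLp s‖ ≤ 1 :=
  lp.norm_le_of_forall_le zero_le_one fun x => by
    by_cases hx : x ∈ s <;> simp [indicatorLp_apply, hx]

def indicatorOp (s : Set X) : ℓ² →L[ℂ] ℓ² := mulOp (indicatorLp s)

@[simp]
theorem indicatorOp_apply (s : Set X) (ξ : ℓ²) (x : X) : indicatorOp s ξ x = s.indicator ξ x := by
  by_cases hx : x ∈ s <;> simp [indicatorOp, indicatorLp_apply, hx]

theorem norm_indicatorOp_le (s : Set X) : ‖indicatorOp s‖ ≤ 1 :=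
  (norm_mulOp_le _).trans (norm_indicatorLp_le s)

theorem norm_indicatorOp_apply_le (s : Set X) (ξ : ℓ²) : ‖indicatorOp s ξ‖ ≤ ‖ξ‖ :=
  (indicatorOp s).le_of_opNorm_le (norm_indicatorOp_le s) ξ |>.trans_eq (one_mul _)

theorem indicatorOp_union {s t : Set X} (h : Disjoint s t) :
    indicatorOp (s ∪ t) = indicatorOp s + indicatorOp t := by
  ext ξ x; simp [Set.indicator_union_of_disjoint h]

theorem indicatorOp_compl (s : Set X) : indicatorOp sᶜ = 1 - indicatorOp s := by
  ext ξ x; simp [Set.indicator_compl]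

theorem sum_indicatorOp {ι : Type*} {s : Finset ι} {B : ι → Set X}
    (hB : (s : Set ι).PairwiseDisjoint B) :
    ∑ k ∈ s, indicatorOp (B k) = indicatorOp (⋃ k ∈ s, B k) := by
  ext ξ x
  rw [sum_apply, lp.coeFn_sum, Finset.sum_apply]
  simp [Finset.indicator_biUnion_apply s B hB]

theorem inner_indicatorOp_eq_zero {s t : Set X} (h : Disjoint s t) (ξ η : ℓ²) :
    inner ℂ (indicatorOp s ξ) (indicatorOp t η) = 0 := by
  rw [lp.inner_eq_tsum]
  refine (tsum_congr fun x => ?_).trans tsum_zero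
  by_cases hx : x ∈ s
  · simp [Set.disjoint_left.mp h hx]
  · simp [hx]

section Orthogonality

variable {ι : Type*} {s : Finset ι} {B : ι → Set X}

theorem norm_sq_sum_indicatorOp (hB : (s : Set ι).PairwiseDisjoint B) (η : ι → ℓ²) :
    ‖∑ k ∈ s, indicatorOp (B k) (η k)‖ ^ 2 = ∑ k ∈ s, ‖indicatorOp (B k) (η k)‖ ^ 2 := by
  have hdiag : ∀ i ∈ s, inner ℂ (indicatorOp (B i) (η i)) (∑ k ∈ s, indicatorOp (B k) (η k))
      = inner ℂ (indicatorOp (B i) (η i)) (indicatorOp (B i) (η i)) := fun i hi => by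
    rw [inner_sum]
    exact Finset.sum_eq_single_of_mem i hi fun j hj hji =>
      inner_indicatorOp_eq_zero (hB hi hj hji.symm) _ _
  simp only [@norm_sq_eq_re_inner ℂ, sum_inner, Finset.sum_congr rfl hdiag, map_sum]

theorem sum_norm_sq_indicatorOp_le (hB : (s : Set ι).PairwiseDisjoint B) (ξ : ℓ²) :
    ∑ k ∈ s, ‖indicatorOp (B k) ξ‖ ^ 2 ≤ ‖ξ‖ ^ 2 := by
  rw [← norm_sq_sum_indicatorOp hB, ← sum_apply, sum_indicatorOp hB]
  gcongr
  exact norm_indicatorOp_apply_le _ ξ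

theorem norm_sum_indicatorOp_mul_le (hB : (s : Set ι).PairwiseDisjoint B) (A : ι → ℓ² →L[ℂ] ℓ²) :
    ‖∑ k ∈ s, indicatorOp (B k) * A k‖ ≤ √(∑ k ∈ s, ‖A k‖ ^ 2) := by
  refine ContinuousLinearMap.opNorm_le_bound _ (Real.sqrt_nonneg _) fun ξ => ?_
  refine le_of_pow_le_pow_left₀ two_ne_zero (by positivity) ?_
  calc ‖(∑ k ∈ s, indicatorOp (B k) * A k) ξ‖ ^ 2
      = ∑ k ∈ s, ‖indicatorOp (B k) (A k ξ)‖ ^ 2 := by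
        rw [sum_apply]; exact norm_sq_sum_indicatorOp hB _
    _ ≤ ∑ k ∈ s, (‖A k‖ * ‖ξ‖) ^ 2 := by
        gcongr with k
        exact (norm_indicatorOp_apply_le _ _).trans ((A k).le_opNorm ξ)
    _ = (√(∑ k ∈ s, ‖A k‖ ^ 2) * ‖ξ‖) ^ 2 := by
        rw [mul_pow, Real.sq_sqrt (by positivity), Finset.sum_mul]
        simp only [mul_pow]

theorem norm_sum_mul_indicatorOp_le (hB : (s : Set ι).PairwiseDisjoint B) (A : ι → ℓ² →L[ℂ] ℓ²) :
    ‖∑ k ∈ s, A k * indicatorOp (B k)‖ ≤ √(∑ k ∈ s, ‖A k‖ ^ 2) := by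
  refine ContinuousLinearMap.opNorm_le_bound _ (Real.sqrt_nonneg _) fun ξ => ?_
  calc ‖(∑ k ∈ s, A k * indicatorOp (B k)) ξ‖
      ≤ ∑ k ∈ s, ‖A k‖ * ‖indicatorOp (B k) ξ‖ := by
        rw [sum_apply]
        exact norm_sum_le_of_le _ fun k _ => (A k).le_opNorm _
    _ ≤ √(∑ k ∈ s, ‖A k‖ ^ 2) * √(∑ k ∈ s, ‖indicatorOp (B k) ξ‖ ^ 2) :=
        Real.sum_mul_le_sqrt_mul_sqrt _ _ _
    _ ≤ √(∑ k ∈ s, ‖A k‖ ^ 2) * ‖ξ‖ := by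
        gcongr
        exact Real.sqrt_le_iff.mpr ⟨norm_nonneg ξ, sum_norm_sq_indicatorOp_le hB ξ⟩

end Orthogonality

theorem norm_commutator_le {A : Type*} [NormedRing A] (a b : A) :
    ‖a * b - b * a‖ ≤ 2 * ‖a‖ * ‖b‖ := by
  calc ‖a * b - b * a‖ ≤ ‖a‖ * ‖b‖ + ‖b‖ * ‖a‖ :=
        (norm_sub_le _ _).trans (add_le_add (norm_mul_le _ _) (norm_mul_le _ _))
    _ = 2 * ‖a‖ * ‖b‖ := by ring

theorem commutator_indicatorOp_eq (T : ℓ² →L[ℂ] ℓ²) {E F : Set X} (h : Disjoint E F) :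
    T * indicatorOp E - indicatorOp E * T = indicatorOp F * T * indicatorOp E
      + indicatorOp (E ∪ F)ᶜ * (T * indicatorOp E)
      - indicatorOp E * T * indicatorOp F
      - indicatorOp E * T * indicatorOp (E ∪ F)ᶜ := by
  rw [indicatorOp_compl, indicatorOp_union h]
  noncomm_ring

theorem norm_commutator_sum_indicatorOp_le (T : ℓ² →L[ℂ] ℓ²) {ι : Type*} {s : Finset ι}
    {E F : ι → Set X} {ε' : ℝ} (hEF : ∀ k ∈ s, Disjoint (E k) (F k))
    (hband : (s : Set ι).PairwiseDisjoint fun k => (E k ∪ F k)ᶜ)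
    (hFE : ∀ k ∈ s, ‖indicatorOp (F k) * T * indicatorOp (E k)‖ ≤ ε')
    (hEF' : ∀ k ∈ s, ‖indicatorOp (E k) * T * indicatorOp (F k)‖ ≤ ε') :
    ‖T * ∑ k ∈ s, indicatorOp (E k) - (∑ k ∈ s, indicatorOp (E k)) * T‖
      ≤ 2 * (s.card * ε') + 2 * (√s.card * ‖T‖) := by
  have hsqrt : ∀ A : ι → ℓ² →L[ℂ] ℓ², (∀ k, ‖A k‖ ≤ ‖T‖) →
      √(∑ k ∈ s, ‖A k‖ ^ 2) ≤ √s.card * ‖T‖ := fun A hA => by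
    rw [← Real.sqrt_sq (norm_nonneg T), ← Real.sqrt_mul (Nat.cast_nonneg _)]
    gcongr
    refine (Finset.sum_le_sum fun k _ => ?_).trans_eq (by rw [Finset.sum_const, nsmul_eq_mul])
    gcongr
    exact hA k
  have hTE : ∀ k, ‖T * indicatorOp (E k)‖ ≤ ‖T‖ := fun k =>
    (norm_mul_le _ _).trans (mul_le_of_le_one_right (norm_nonneg T) (norm_indicatorOp_le _))
  have hET : ∀ k, ‖indicatorOp (E k) * T‖ ≤ ‖T‖ := fun k =>
    (norm_mul_le _ _).trans (mul_le_of_le_one_left (norm_nonneg T) (norm_indicatorOp_le _))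
  rw [Finset.mul_sum, Finset.sum_mul, ← Finset.sum_sub_distrib,
    Finset.sum_congr rfl fun k hk => commutator_indicatorOp_eq T (hEF k hk),
    Finset.sum_sub_distrib, Finset.sum_sub_distrib, Finset.sum_add_distrib]
  have hFE_sum := norm_sum_le_of_le s hFE
  have hEF_sum := norm_sum_le_of_le s hEF'
  have hrow := (norm_sum_indicatorOp_mul_le hband _).trans (hsqrt _ hTE)
  have hcol := (norm_sum_mul_indicatorOp_le hband _).trans (hsqrt _ hET)
  simp only [Finset.sum_const, nsmul_eq_mul] at hFE_sum hEF_sum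
  calc _ ≤ ‖∑ k ∈ s, indicatorOp (F k) * T * indicatorOp (E k)‖
        + ‖∑ k ∈ s, indicatorOp (E k ∪ F k)ᶜ * (T * indicatorOp (E k))‖
        + ‖∑ k ∈ s, indicatorOp (E k) * T * indicatorOp (F k)‖
        + ‖∑ k ∈ s, indicatorOp (E k) * T * indicatorOp (E k ∪ F k)ᶜ‖ := by
          refine (norm_sub_le _ _).trans ?_
          gcongr
          exact (norm_sub_le _ _).trans (by gcongr; exact norm_add_le _ _)
    _ ≤ _ := by linarith

def QuasiLocalWith [MetricSpace X] (T : ℓ² →L[ℂ] ℓ²) (ε R : ℝ) : Prop :=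
  ∀ f g : ℓ∞, SepGT R f g → ‖mulOp f ∘L T ∘L mulOp g‖ ≤ ε * ‖f‖ * ‖g‖

theorem norm_indicatorOp_mul_mul_indicatorOp_le [MetricSpace X] {T : ℓ² →L[ℂ] ℓ²} {ε' R : ℝ}
    (hε' : 0 ≤ ε') (hT : QuasiLocalWith T ε' R)
    {s t : Set X} (hst : ∀ x ∈ s, ∀ y ∈ t, R < dist x y) :
    ‖indicatorOp s * T * indicatorOp t‖ ≤ ε' := by
  have hsupp : ∀ u : Set X, Function.support (⇑(indicatorLp u) : X → ℂ) ⊆ u := fun u x hx => by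
    by_contra hxu
    exact hx (by simp [indicatorLp_apply, hxu])
  have hsep : SepGT R (indicatorLp s) (indicatorLp t) := fun x hx y hy =>
    hst x (hsupp s hx) y (hsupp t hy)
  calc ‖indicatorOp s * T * indicatorOp t‖
      ≤ ε' * ‖indicatorLp s‖ * ‖indicatorLp t‖ := by rw [mul_assoc]; exact hT _ _ hsep
    _ ≤ ε' * 1 * 1 := by gcongr <;> exact norm_indicatorLp_le _
    _ = ε' := by ring

theorem abs_sub_card_filter_lt_le {t : ℝ} {M : ℕ} (h0 : 0 ≤ t) (hM : t ≤ M) :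
    |t - ((Finset.Icc 1 M).filter fun k : ℕ => (k : ℝ) < t).card| ≤ 1 := by
  have hfilter : ((Finset.Icc 1 M).filter fun k : ℕ => (k : ℝ) < t) = Finset.Ico 1 ⌈t⌉₊ := by
    ext k
    simp only [Finset.mem_filter, Finset.mem_Icc, Finset.mem_Ico, ← Nat.lt_ceil]
    have := Nat.ceil_le.mpr hM
    omega
  rw [hfilter, Nat.card_Ico]
  rcases Nat.eq_zero_or_pos ⌈t⌉₊ with h | h
  · have ht : t = 0 := le_antisymm (Nat.ceil_eq_zero.mp h) h0
    simp [ht]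
  · rw [Nat.cast_sub h, abs_le]
    push_cast
    constructor <;> linarith [Nat.le_ceil t, Nat.ceil_lt_add_one h0]

theorem norm_sub_sum_indicatorLp_le {w : ℓ∞} {v : X → ℝ} (hwv : ∀ x, w x = v x) {a : ℝ} {M : ℕ}
    (hv : ∀ x, v x ∈ Set.Icc a (a + M)) :
    ‖w - (a : ℂ) • 1 - ∑ k ∈ Finset.Icc 1 M, indicatorLp {x | (k : ℝ) < v x - a}‖ ≤ 1 := by
  refine lp.norm_le_of_forall_le zero_le_one fun x => ?_
  have hx : (w - (a : ℂ) • 1 - ∑ k ∈ Finset.Icc 1 M, indicatorLp {x | (k : ℝ) < v x - a}) x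
      = ((v x - a - ((Finset.Icc 1 M).filter fun k : ℕ => (k : ℝ) < v x - a).card : ℝ) : ℂ) := by
    rw [lp.coeFn_sub, lp.coeFn_sub, Pi.sub_apply, Pi.sub_apply, lp.coeFn_sum, Finset.sum_apply,
      lp.coeFn_smul, lp.infty_coeFn_one]
    simp [hwv, indicatorLp_apply, Set.indicator_apply, Finset.sum_boole]
  rw [hx, Complex.norm_real, Real.norm_eq_abs]
  exact abs_sub_card_filter_lt_le (by linarith [(hv x).1]) (by linarith [(hv x).2])

theorem pairwiseDisjoint_compl_levelSets_union (u : X → ℝ) (s : Set ℕ) :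
    s.PairwiseDisjoint fun k : ℕ => ({x | (k : ℝ) < u x} ∪ {x | u x ≤ k - 1})ᶜ := by
  intro i _ j _ hij
  refine Set.disjoint_left.mpr fun x hi hj => hij ?_
  simp only [Set.mem_compl_iff, Set.mem_union, Set.mem_ofPred_eq, not_or, not_lt, not_le] at hi hj
  have hij' : i < j + 1 := by exact_mod_cast (by linarith : (i : ℝ) < j + 1)
  have hji' : j < i + 1 := by exact_mod_cast (by linarith : (j : ℝ) < i + 1)
  omega

theorem norm_commutator_mulOp_le_of_unit_oscillation [MetricSpace X] {T : ℓ² →L[ℂ] ℓ²}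
    {ε' R : ℝ} (hε' : 0 ≤ ε') (hT : QuasiLocalWith T ε' R)
    {w : ℓ∞} {v : X → ℝ} (hwv : ∀ x, w x = v x) {a : ℝ} {M : ℕ}
    (hv : ∀ x, v x ∈ Set.Icc a (a + M)) (hosc : ∀ x y, dist x y ≤ R → |v x - v y| < 1) :
    ‖T * mulOp w - mulOp w * T‖ ≤ 2 * (M * ε') + 2 * (√M * ‖T‖) + 2 * ‖T‖ := by
  set E : ℕ → Set X := fun k => {x | (k : ℝ) < v x - a}
  set F : ℕ → Set X := fun k => {x | v x - a ≤ k - 1}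
  set r := w - (a : ℂ) • 1 - ∑ k ∈ Finset.Icc 1 M, indicatorLp (E k)
  have hsep : ∀ k : ℕ, ∀ x ∈ F k, ∀ y ∈ E k, R < dist x y := fun k x hx y hy => by
    by_contra! hxy
    have := hosc x y hxy
    rw [abs_lt] at this
    simp only [E, F, Set.mem_ofPred_eq] at hx hy
    linarith
  have hw : mulOp w = (a : ℂ) • 1 + ∑ k ∈ Finset.Icc 1 M, indicatorOp (E k) + mulOp r := by
    rw [show w = (a : ℂ) • 1 + ∑ k ∈ Finset.Icc 1 M, indicatorLp (E k) + r by simp only [r]; abel,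
      mulOp_add, mulOp_add, mulOp_smul, mulOp_one, mulOp_sum]
    rfl
  have hsplit : T * mulOp w - mulOp w * T
      = (T * ∑ k ∈ Finset.Icc 1 M, indicatorOp (E k) - (∑ k ∈ Finset.Icc 1 M, indicatorOp (E k)) * T)
        + (T * mulOp r - mulOp r * T) := by
    rw [hw]
    simp only [mul_add, add_mul, mul_smul_comm, smul_mul_assoc, mul_one, one_mul]
    abel
  have hdisj : ∀ k, Disjoint (E k) (F k) := fun k =>
    Set.disjoint_left.mpr fun x (hE : (k : ℝ) < v x - a) (hF : v x - a ≤ k - 1) => by linarith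
  have hlevels := norm_commutator_sum_indicatorOp_le T (s := Finset.Icc 1 M) (E := E) (F := F)
    (fun k _ => hdisj k) (pairwiseDisjoint_compl_levelSets_union (fun x => v x - a) _)
    (fun k _ => norm_indicatorOp_mul_mul_indicatorOp_le hε' hT (hsep k))
    (fun k _ => norm_indicatorOp_mul_mul_indicatorOp_le hε' hT fun x hx y hy =>
      dist_comm x y ▸ hsep k y hy x hx)
  rw [Nat.card_Icc, Nat.add_sub_cancel] at hlevels
  have hrest : ‖T * mulOp r - mulOp r * T‖ ≤ 2 * ‖T‖ :=
    calc ‖T * mulOp r - mulOp r * T‖ ≤ 2 * ‖T‖ * ‖mulOp r‖ := norm_commutator_le _ _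
      _ ≤ 2 * ‖T‖ * 1 := by
        gcongr
        exact (norm_mulOp_le r).trans (norm_sub_sum_indicatorLp_le hwv hv)
      _ = 2 * ‖T‖ := mul_one _
  rw [hsplit]
  exact (norm_add_le _ _).trans (add_le_add hlevels hrest)

theorem norm_commutator_mulOp_le_of_oscillation [MetricSpace X] {T : ℓ² →L[ℂ] ℓ²}
    {ε' R : ℝ} (hε' : 0 ≤ ε') (hT : QuasiLocalWith T ε' R)
    {w : ℓ∞} {v : X → ℝ} (hwv : ∀ x, w x = v x) (hv : ∀ x, |v x| ≤ 1) {N : ℕ} (hN : 0 < N)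
    (hosc : ∀ x y, dist x y ≤ R → |v x - v y| < 1 / N) :
    ‖T * mulOp w - mulOp w * T‖ ≤ 4 * ε' + 2 * (√(2 * N) + 1) / N * ‖T‖ := by
  have hNpos : (0 : ℝ) < N := Nat.cast_pos.mpr hN
  have hunit := norm_commutator_mulOp_le_of_unit_oscillation hε' hT (w := (N : ℂ) • w)
    (v := fun x => N * v x) (a := -N) (M := 2 * N)
    (fun x => by simp [hwv])
    (fun x => by
      have := abs_le.mp (hv x)
      constructor <;> push_cast <;> nlinarith)
    (fun x y hxy => by
      rw [← mul_sub, abs_mul, Nat.abs_cast]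
      have := hosc x y hxy
      rwa [lt_div_iff₀ hNpos, mul_comm] at this)
  rw [mulOp_smul, mul_smul_comm, smul_mul_assoc, ← smul_sub, norm_smul, Complex.norm_natCast]
    at hunit
  refine le_of_mul_le_mul_left (hunit.trans_eq ?_) hNpos
  field_simp
  push_cast
  ring

theorem exists_nat_sqrt_two_mul_add_one_div_lt {η : ℝ} (hη : 0 < η) :
    ∃ N : ℕ, 0 < N ∧ (√(2 * N) + 1) / N < η := by
  obtain ⟨N, hN⟩ := exists_nat_gt (8 / η ^ 2)
  have hNpos : (0 : ℝ) < N := lt_of_le_of_lt (by positivity) hN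
  have hηN : 8 < η ^ 2 * N := by rwa [div_lt_iff₀ (by positivity), mul_comm] at hN
  have hsqrt : √(2 * N) < η * N / 2 :=
    (Real.sqrt_lt' (by positivity)).mpr (by nlinarith)
  have hone : 1 ≤ √(2 * N) :=
    Real.le_sqrt_of_sq_le (by linarith [(Nat.one_le_cast (α := ℝ)).mpr (Nat.cast_pos.mp hNpos)])
  exact ⟨N, Nat.cast_pos.mp hNpos, (div_lt_iff₀ hNpos).mpr (by linarith)⟩

open scoped ComplexStarModule in
theorem lp.realPart_apply {p : ℝ≥0∞} (h : lp (fun _ : X => ℂ) p) (x : X) :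
    (ℜ h : lp (fun _ : X => ℂ) p) x = (h x).re := by
  rw [realPart_apply_coe]
  change (2⁻¹ : ℝ) • (h x + star (h x)) = _
  rw [Complex.star_def, Complex.re_eq_add_conj, Complex.real_smul]
  push_cast
  ring

open scoped ComplexStarModule in
theorem lp.imaginaryPart_apply {p : ℝ≥0∞} (h : lp (fun _ : X => ℂ) p) (x : X) :
    (ℑ h : lp (fun _ : X => ℂ) p) x = (h x).im := by
  rw [imaginaryPart_apply_coe]
  change -Complex.I • (2⁻¹ : ℝ) • (h x - star (h x)) = _
  rw [Complex.star_def, Complex.im_eq_sub_conj, Complex.real_smul, smul_eq_mul, div_eq_mul_inv,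
    mul_inv, Complex.inv_I]
  push_cast
  ring

open scoped ComplexStarModule in
theorem norm_commutator_mulOp_le_realPart_add_imaginaryPart (T : ℓ² →L[ℂ] ℓ²) (h : ℓ∞) :
    ‖T * mulOp h - mulOp h * T‖
      ≤ ‖T * mulOp (ℜ h) - mulOp (ℜ h) * T‖ + ‖T * mulOp (ℑ h) - mulOp (ℑ h) * T‖ := by
  have hsplit : T * mulOp h - mulOp h * T = (T * mulOp (ℜ h) - mulOp (ℜ h) * T)
      + Complex.I • (T * mulOp (ℑ h) - mulOp (ℑ h) * T) := by
    conv_lhs => rw [← realPart_add_I_smul_imaginaryPart h, mulOp_add, mulOp_smul]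
    simp only [mul_add, add_mul, mul_smul_comm, smul_mul_assoc, smul_sub]
    abel
  rw [hsplit]
  refine (norm_add_le _ _).trans_eq ?_
  rw [norm_smul, Complex.norm_I, one_mul]

theorem quasiLocal_implies_commutant_condition_general [MetricSpace X]
    (T : lp (fun _ : X => ℂ) 2 →L[ℂ] lp (fun _ : X => ℂ) 2)
    (hTnorm : ‖T‖ ≤ 1) (hT : QuasiLocal T) :
    ∀ ε : ℝ, 0 < ε → ε < 1 → ∃ δ > (0 : ℝ), ∃ R > (0 : ℝ),
      ∀ h : lp (fun _ : X => ℂ) ∞, ‖h‖ = 1 →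
        (∀ x y : X, dist x y ≤ R → ‖h x - h y‖ < δ) →
        ‖T ∘L mulOp h - mulOp h ∘L T‖ < ε := by
  intro ε hε _
  obtain ⟨N, hN, hNε⟩ := exists_nat_sqrt_two_mul_add_one_div_lt (by positivity : 0 < ε / 8)
  obtain ⟨R, hR, hTR⟩ := hT (ε / 16) (by positivity)
  refine ⟨1 / N, by positivity, R, hR, fun h hh hosc => ?_⟩
  have hpart : ∀ (w : ℓ∞) (v : X → ℝ), (∀ x, w x = v x) → (∀ x, |v x| ≤ ‖h x‖) →
      (∀ x y, |v x - v y| ≤ ‖h x - h y‖) → ‖T * mulOp w - mulOp w * T‖ < ε / 2 :=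
    fun w v hwv hv hvosc => calc
      _ ≤ 4 * (ε / 16) + 2 * (√(2 * N) + 1) / N * ‖T‖ :=
        norm_commutator_mulOp_le_of_oscillation (by positivity) hTR hwv
          (fun x => (hv x).trans (hh ▸ lp.norm_apply_le_norm (by simp) h x)) hN
          fun x y hxy => (hvosc x y).trans_lt (hosc x y hxy)
      _ ≤ 4 * (ε / 16) + 2 * ((√(2 * N) + 1) / N) := by
        rw [mul_div_assoc]
        linarith [mul_le_of_le_one_right (by positivity : 0 ≤ 2 * ((√(2 * N) + 1) / N)) hTnorm]
      _ < ε / 2 := by linarith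
  calc ‖T ∘L mulOp h - mulOp h ∘L T‖ ≤ _ := norm_commutator_mulOp_le_realPart_add_imaginaryPart T h
    _ < ε / 2 + ε / 2 := add_lt_add
      (hpart _ _ (lp.realPart_apply h) (fun x => Complex.abs_re_le_norm _)
        fun x y => by rw [← Complex.sub_re]; exact Complex.abs_re_le_norm _)
      (hpart _ _ (lp.imaginaryPart_apply h) (fun x => Complex.abs_im_le_norm _)
        fun x y => by rw [← Complex.sub_im]; exact Complex.abs_im_le_norm _)
    _ = ε := add_halves ε

/-- a quasi-local operator of norm at most one on a bounded geometry space
almost commutes with slowly varying bounded functions. -/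
theorem quasiLocal_implies_commutant_condition [MetricSpace X]
    (hbg : ∀ r > (0 : ℝ), ∃ N : ℕ, ∀ x : X,
      (Metric.closedBall x r).Finite ∧ (Metric.closedBall x r).ncard ≤ N)
    (T : lp (fun _ : X => ℂ) 2 →L[ℂ] lp (fun _ : X => ℂ) 2)
    (hTnorm : ‖T‖ ≤ 1) (hT : QuasiLocal T) :
    ∀ ε : ℝ, 0 < ε → ε < 1 → ∃ δ > (0 : ℝ), ∃ R > (0 : ℝ),
      ∀ h : lp (fun _ : X => ℂ) ∞, ‖h‖ = 1 →
        (∀ x y : X, dist x y ≤ R → ‖h x - h y‖ < δ) →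
        ‖T ∘L mulOp h - mulOp h ∘L T‖ < ε :=
  quasiLocal_implies_commutant_condition_general T hTnorm hT
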